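/- arXiv:1412.0629 — 2 statements merged into one kernel-verified Lean document; each statement's English description precedes it below -/
import Mathlib

section
/- Let (Aₙ) be a sequence of invertible linear maps on a finite-dimensional real inner product space, let v_s, u, v be vectors with v_s = c·u + v where c ≠ 0, ‖Aₙ v_s‖ → 0, ‖Aₙ u‖ → ∞, and ‖Aₙ v‖ → ∞. Then the angle between Aₙ u and Aₙ v tends to 0 as n → ∞ (i.e., the distance between the unit vectors Aₙu/‖Aₙu‖ and ±Aₙv/‖Aₙv‖ tends to 0 along a suitable choice of signs; equivalently, the sine of the angle between the lines spanned by Aₙu and Aₙv tends to 0). -/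
/-!
Write `x = Aₙ u`, `w = Aₙ vs`, so that `Aₙ v = -c • x + w`. Cauchy–Schwarz and the triangle
inequality give `|⟨x, -c • x + w⟩| / (‖x‖ ‖-c • x + w‖) ≥ (|c| ‖x‖ - ‖w‖) / (|c| ‖x‖ + ‖w‖)`, and the
right-hand side tends to `1` because `‖x‖ → ∞` while `‖w‖ → 0`. So the cosine of the angle tends
to `1` and, by continuity of `arccos`, the angle tends to `0`.
-/

open Filter Topology

theorem sub_div_add_le_abs_real_inner_smul_add_div {E : Type*} [NormedAddCommGroup E]
    [InnerProductSpace ℝ E] (x w : E) (c : ℝ) :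
    (|c| * ‖x‖ - ‖w‖) / (|c| * ‖x‖ + ‖w‖) ≤
      |inner ℝ x (c • x + w)| / (‖x‖ * ‖c • x + w‖) := by
  rcases le_or_gt (|c| * ‖x‖) ‖w‖ with hle | hlt
  · exact (div_nonpos_of_nonpos_of_nonneg (by linarith) (by positivity)).trans (by positivity)
  have hx : 0 < ‖x‖ := pos_of_mul_pos_right ((norm_nonneg w).trans_lt hlt) (abs_nonneg c)
  have hnum : ‖x‖ * (|c| * ‖x‖ - ‖w‖) ≤ |inner ℝ x (c • x + w)| := by
    have hinner : inner ℝ x (c • x + w) = c * ‖x‖ ^ 2 + inner ℝ x w := by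
      rw [inner_add_right, real_inner_smul_right, real_inner_self_eq_norm_sq]
    have hcx : |c * ‖x‖ ^ 2| = |c| * ‖x‖ ^ 2 := by
      rw [abs_mul, abs_of_nonneg (sq_nonneg ‖x‖)]
    rw [hinner]
    linarith [abs_sub_abs_le_abs_add (c * ‖x‖ ^ 2) (inner ℝ x w), abs_real_inner_le_norm x w]
  have hnorm : |c| * ‖x‖ - ‖w‖ ≤ ‖c • x + w‖ := by
    simpa only [norm_smul, Real.norm_eq_abs] using norm_sub_le_norm_add (c • x) w
  have hden : ‖c • x + w‖ ≤ |c| * ‖x‖ + ‖w‖ := by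
    simpa only [norm_smul, Real.norm_eq_abs] using norm_add_le (c • x) w
  calc (|c| * ‖x‖ - ‖w‖) / (|c| * ‖x‖ + ‖w‖)
      = ‖x‖ * (|c| * ‖x‖ - ‖w‖) / (‖x‖ * (|c| * ‖x‖ + ‖w‖)) :=
        (mul_div_mul_left _ _ hx.ne').symm
    _ ≤ |inner ℝ x (c • x + w)| / (‖x‖ * ‖c • x + w‖) :=
      div_le_div₀ (abs_nonneg _) hnum (mul_pos hx (by linarith))
        (mul_le_mul_of_nonneg_left hden hx.le)

theorem Filter.Tendsto.mul_sub_div_mul_add {α : Type*} {l : Filter α} {a s : α → ℝ} {k σ : ℝ}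
    (hk : 0 < k) (ha : Tendsto a l atTop) (hs : Tendsto s l (𝓝 σ)) :
    Tendsto (fun i => (k * a i - s i) / (k * a i + s i)) l (𝓝 1) := by
  have hsa : Tendsto (fun i => s i / a i) l (𝓝 0) := hs.div_atTop ha
  have hlim : Tendsto (fun i => (k - s i / a i) / (k + s i / a i)) l (𝓝 1) := by
    simpa [div_self hk.ne', Pi.div_def] using
      ((tendsto_const_nhds (x := k)).sub hsa).div ((tendsto_const_nhds (x := k)).add hsa)
        (by simpa using hk.ne')
  refine hlim.congr' ((ha.eventually_gt_atTop 0).mono fun i hai => ?_)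
  rw [← mul_div_mul_left (k - s i / a i) _ hai.ne']
  congr 1 <;> field_simp

theorem stmt_2_general {V : Type*} [NormedAddCommGroup V] [InnerProductSpace ℝ V]
    (A : ℕ → (V →ₗ[ℝ] V))
    (vs u v : V) (c : ℝ) (hc : c ≠ 0) (hvs : vs = c • u + v)
    (hs : Tendsto (fun n => ‖A n vs‖) atTop (nhds 0))
    (hu : Tendsto (fun n => ‖A n u‖) atTop atTop) :
    Tendsto (fun n => Real.arccos (|(inner ℝ (A n u) (A n v) : ℝ)| / (‖A n u‖ * ‖A n v‖)))
      atTop (nhds 0) := by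
  have hAv : ∀ n, A n v = (-c) • A n u + A n vs := fun n => by
    rw [hvs, map_add, map_smul, neg_smul, neg_add_cancel_left]
  have hcos : Tendsto (fun n => |(inner ℝ (A n u) (A n v) : ℝ)| / (‖A n u‖ * ‖A n v‖))
      atTop (𝓝 1) := by
    refine tendsto_of_tendsto_of_tendsto_of_le_of_le
      (hu.mul_sub_div_mul_add (abs_pos.mpr hc) hs) tendsto_const_nhds (fun n => ?_)
      (fun n => div_le_one_of_le₀ (abs_real_inner_le_norm _ _) (by positivity))
    simpa only [hAv, abs_neg] using
      sub_div_add_le_abs_real_inner_smul_add_div (A n u) (A n vs) (-c)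
  simpa only [Function.comp_def, Real.arccos_one] using
    (Real.continuous_arccos.tendsto 1).comp hcos

theorem stmt_2 {V : Type*} [NormedAddCommGroup V] [InnerProductSpace ℝ V]
    [FiniteDimensional ℝ V] (A : ℕ → (V →ₗ[ℝ] V)) (hA : ∀ n, Function.Bijective (A n))
    (vs u v : V) (c : ℝ) (hc : c ≠ 0) (hvs : vs = c • u + v)
    (hs : Tendsto (fun n => ‖A n vs‖) atTop (nhds 0))
    (hu : Tendsto (fun n => ‖A n u‖) atTop atTop)
    (hv : Tendsto (fun n => ‖A n v‖) atTop atTop) :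
    Tendsto (fun n => Real.arccos (|(inner ℝ (A n u) (A n v) : ℝ)| / (‖A n u‖ * ‖A n v‖)))
      atTop (nhds 0) :=
  stmt_2_general A vs u v c hc hvs hs hu
end

section
/- Let A be a linear map on ℝᵈ admitting an A-invariant splitting ℝᵈ = Eˢ ⊕ Eᵘ with ‖Aᵏ w‖ ≥ c σᵏ ‖w‖ for w ∈ Eᵘ (σ > 1, c > 0) and ‖Aᵏ w‖ ≤ C θᵏ ‖w‖ for w ∈ Eˢ (0 < θ < 1, C > 0). Fix ε > 0 and δ > 0 with (1+2δ)θ < 1. Then there exists k₀ ∈ ℕ such that for all k > k₀ and every v ∈ ℝᵈ: if ‖Aᵏ v‖ < ((1+2δ)θ)ᵏ ‖v‖ then ‖πᵘ(v)‖ < ε ‖πˢ(v)‖, where πˢ, πᵘ are the projections associated with the splitting. -/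
theorem stmt_14 (d : ℕ) (A : EuclideanSpace ℝ (Fin d) →ₗ[ℝ] EuclideanSpace ℝ (Fin d))
    (Es Eu : Submodule ℝ (EuclideanSpace ℝ (Fin d))) (hcompl : IsCompl Es Eu)
    (hinvs : ∀ w ∈ Es, A w ∈ Es) (hinvu : ∀ w ∈ Eu, A w ∈ Eu)
    (c C σ θ : ℝ) (hc : 0 < c) (hC : 0 < C) (hσ : 1 < σ) (hθ0 : 0 < θ) (hθ1 : θ < 1)
    (hyp : ∀ (k : ℕ), ∀ w ∈ Eu, c * σ ^ k * ‖w‖ ≤ ‖(A ^ k) w‖)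
    (hyps : ∀ (k : ℕ), ∀ w ∈ Es, ‖(A ^ k) w‖ ≤ C * θ ^ k * ‖w‖)
    (πs πu : EuclideanSpace ℝ (Fin d) →ₗ[ℝ] EuclideanSpace ℝ (Fin d))
    (hproj : ∀ v, πs v ∈ Es ∧ πu v ∈ Eu ∧ πs v + πu v = v)
    (ε δ : ℝ) (hε : 0 < ε) (hδ : 0 < δ) (hδθ : (1 + 2 * δ) * θ < 1) :
    ∃ k₀ : ℕ, ∀ k > k₀, ∀ v : EuclideanSpace ℝ (Fin d),
      ‖(A ^ k) v‖ < ((1 + 2 * δ) * θ) ^ k * ‖v‖ → ‖πu v‖ < ε * ‖πs v‖ := by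
  set ρ : ℝ := (1 + 2 * δ) * θ with hρdef
  have hρ0 : 0 ≤ ρ := by positivity
  have h1 : Filter.Tendsto (fun k : ℕ => ρ ^ k + C * θ ^ k) Filter.atTop (nhds 0) := by
    have := (tendsto_pow_atTop_nhds_zero_of_lt_one hρ0 hδθ).add
      ((tendsto_pow_atTop_nhds_zero_of_lt_one hθ0.le hθ1).const_mul C)
    simpa using this
  have h2 : Filter.Tendsto (fun k : ℕ => c * σ ^ k) Filter.atTop Filter.atTop :=
    (tendsto_pow_atTop_atTop_of_one_lt hσ).const_mul_atTop hc
  have hev : ∀ᶠ k in Filter.atTop, (ρ ^ k + C * θ ^ k ≤ ε ∧ 2 ≤ c * σ ^ k) := by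
    filter_upwards [h1.eventually_le_const hε, h2.eventually_ge_atTop 2] with k hk1 hk2
    exact ⟨hk1, hk2⟩
  obtain ⟨k₀, hk₀⟩ := Filter.eventually_atTop.mp hev
  refine ⟨k₀, ?_⟩
  intro k hk v hv
  obtain ⟨hke, hkg⟩ := hk₀ k hk.le
  obtain ⟨hs, hu, hsum⟩ := hproj v
  have hAu : c * σ ^ k * ‖πu v‖ ≤ ‖(A ^ k) (πu v)‖ := hyp k _ hu
  have hAs : ‖(A ^ k) (πs v)‖ ≤ C * θ ^ k * ‖πs v‖ := hyps k _ hs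
  have hAuv : ‖(A ^ k) (πu v)‖ ≤ ‖(A ^ k) v‖ + ‖(A ^ k) (πs v)‖ := by
    have he : (A ^ k) (πu v) = (A ^ k) v - (A ^ k) (πs v) := by
      rw [eq_sub_of_add_eq' hsum, map_sub]
    rw [he]
    exact norm_sub_le _ _
  have hnv : ‖v‖ ≤ ‖πs v‖ + ‖πu v‖ := by
    conv_lhs => rw [← hsum]
    exact norm_add_le _ _
  have hρk1 : ρ ^ k ≤ 1 := pow_le_one₀ hρ0 hδθ.le
  have hρkn : 0 ≤ ρ ^ k := pow_nonneg hρ0 k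
  have hun : 0 ≤ ‖πu v‖ := norm_nonneg _
  have hsn : 0 ≤ ‖πs v‖ := norm_nonneg _
  nlinarith [mul_le_mul_of_nonneg_left hnv hρkn]
end
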